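/- Interior null form estimate: for smooth functions f, g on ℝ^{1+3} and any point (t,x) with r = |x| ≤ 3t+3, one has |Q_0(f,g)| ≤ C( (⟨t−r⟩/⟨t+r⟩)|∂f||∂g| + ⟨t⟩^{−1}|Γf||Γg| ) for a universal constant C. -/
import Mathlib


noncomputable section

open MeasureTheory Matrix

/-- Space `ℝ³` with the Euclidean norm. -/
abbrev Sp : Type := EuclideanSpace ℝ (Fin 3)

section Ops

variable {F : Type} [NormedAddCommGroup F] [NormedSpace ℝ F]

/-- Time derivative `∂_t u`. -/
def ptE (u : ℝ → Sp → F) (t : ℝ) (x : Sp) : F := deriv (fun s => u s x) t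

/-- Spatial derivative `∂_{x_i} u`. -/
def pxE (i : Fin 3) (u : ℝ → Sp → F) (t : ℝ) (x : Sp) : F :=
  fderiv ℝ (fun y => u t y) x (EuclideanSpace.single i 1)

/-- Spatial Laplacian `Δu`. -/
def lapE (u : ℝ → Sp → F) (t : ℝ) (x : Sp) : F := ∑ i : Fin 3, pxE i (pxE i u) t x

/-- `(-□)u = ∂_t² u - Δ u`, where `□ = -∂_t² + Δ`. -/
def negBox (u : ℝ → Sp → F) (t : ℝ) (x : Sp) : F := ptE (ptE u) t x - lapE u t x

/-- Smoothness of a function of `(t,x)`. -/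
def Smth (u : ℝ → Sp → F) : Prop := ContDiff ℝ (⊤ : ℕ∞) (fun p : ℝ × Sp => u p.1 p.2)

/-- Rotation vector field `Ω_{ab} = x_a ∂_b - x_b ∂_a`. -/
def rotE (a b : Fin 3) (u : ℝ → Sp → F) (t : ℝ) (x : Sp) : F :=
  x a • pxE b u t x - x b • pxE a u t x

/-- Lorentz boost `L_a = t ∂_a + x_a ∂_t`. -/
def boostE (a : Fin 3) (u : ℝ → Sp → F) (t : ℝ) (x : Sp) : F :=
  t • pxE a u t x + x a • ptE u t x

/-- Scaling vector field `L_0 = t ∂_t + x^a ∂_a`. -/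
def scalE (u : ℝ → Sp → F) (t : ℝ) (x : Sp) : F :=
  t • ptE u t x + ∑ a : Fin 3, x a • pxE a u t x

/-- The ten Klainerman vector fields `Γ = (∂, Ω, L)`. -/
def GF : Fin 10 → (ℝ → Sp → F) → ℝ → Sp → F :=
  ![ptE, pxE 0, pxE 1, pxE 2, rotE 0 1, rotE 0 2, rotE 1 2, boostE 0, boostE 1, boostE 2]

/-- Ordered composition `Γ^{I|S}` of the fields of the word `σ` at the positions in `S`. -/
def GComp {n : ℕ} (σ : Fin n → Fin 10) (S : Finset (Fin n)) (f : ℝ → Sp → F) : ℝ → Sp → F :=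
  (S.sort (· ≤ ·)).foldr (fun i g => GF (σ i) g) f

end Ops

/-- Japanese bracket `⟨p⟩ = (1+p²)^{1/2}`. -/
def jb (p : ℝ) : ℝ := Real.sqrt (1 + p ^ 2)

/-- Null form `Q₀(f,g) = ∂_t f ∂_t g - ∇f·∇g` (real-valued). -/
def Q0R (f g : ℝ → Sp → ℝ) (t : ℝ) (x : Sp) : ℝ :=
  ptE f t x * ptE g t x - ∑ a : Fin 3, pxE a f t x * pxE a g t x

/-- Null form `Q₀(f,g)` (complex-valued). -/
def Q0C (f g : ℝ → Sp → ℂ) (t : ℝ) (x : Sp) : ℂ :=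
  ptE f t x * ptE g t x - ∑ a : Fin 3, pxE a f t x * pxE a g t x

/-- `|∂u| = (Σ_{α=0}^3 |∂_α u|²)^{1/2}`. -/
def DNormR (u : ℝ → Sp → ℝ) (t : ℝ) (x : Sp) : ℝ :=
  Real.sqrt ((ptE u t x) ^ 2 + ∑ i : Fin 3, (pxE i u t x) ^ 2)

/-- `Σ_k |Γ_k u|`, the sum of absolute values of all ten Klainerman fields applied to `u`. -/
def GammaAbsSum (u : ℝ → Sp → ℝ) (t : ℝ) (x : Sp) : ℝ :=
  |ptE u t x| + (∑ i : Fin 3, |pxE i u t x|) +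
    (|rotE 0 1 u t x| + |rotE 0 2 u t x| + |rotE 1 2 u t x|) +
    ∑ a : Fin 3, |boostE a u t x|

/-- `|Γu| = (Σ_k |Γ_k u|²)^{1/2}` (real-valued). -/
def GammaNormR (u : ℝ → Sp → ℝ) (t : ℝ) (x : Sp) : ℝ :=
  Real.sqrt ((ptE u t x) ^ 2 + (∑ i : Fin 3, (pxE i u t x) ^ 2) +
    ((rotE 0 1 u t x) ^ 2 + (rotE 0 2 u t x) ^ 2 + (rotE 1 2 u t x) ^ 2) +
    ∑ a : Fin 3, (boostE a u t x) ^ 2)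

/-- `|Γu| = (Σ_k |Γ_k u|²)^{1/2}` (complex-valued). -/
def GammaNormC (u : ℝ → Sp → ℂ) (t : ℝ) (x : Sp) : ℝ :=
  Real.sqrt (‖ptE u t x‖ ^ 2 + (∑ i : Fin 3, ‖pxE i u t x‖ ^ 2) +
    (‖rotE 0 1 u t x‖ ^ 2 + ‖rotE 0 2 u t x‖ ^ 2 + ‖rotE 1 2 u t x‖ ^ 2) +
    ∑ a : Fin 3, ‖boostE a u t x‖ ^ 2)

/-- `Σ_{|J|≤1} |∂Γ^J u|`. -/
def DGam1 (u : ℝ → Sp → ℝ) (t : ℝ) (x : Sp) : ℝ :=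
  DNormR u t x + ∑ k : Fin 10, DNormR (GF k u) t x

/-- The four spacetime derivatives `∂_α`, `α = 0,…,3`. -/
def pd4 : Fin 4 → (ℝ → Sp → ℝ) → ℝ → Sp → ℝ := ![ptE, pxE 0, pxE 1, pxE 2]

abbrev C4 : Type := Fin 4 → ℂ

/-- Diagonal entries of the Minkowski metric `η = diag(-1,1,1,1)`. -/
def ηc : Fin 4 → ℂ := fun μ => if μ = 0 then -1 else 1

/-- Clifford relations `γ^μ γ^ν + γ^ν γ^μ = -2η_{μν} I₄`. -/
def CliffordRel (γ : Fin 4 → Matrix (Fin 4) (Fin 4) ℂ) : Prop :=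
  ∀ μ ν, γ μ * γ ν + γ ν * γ μ =
    ((-2 : ℂ) * (if μ = ν then ηc μ else 0)) • (1 : Matrix (Fin 4) (Fin 4) ℂ)

/-- Adjoint relations `(γ^μ)* = -η_{μμ} γ^μ`. -/
def AdjRel (γ : Fin 4 → Matrix (Fin 4) (Fin 4) ℂ) : Prop :=
  ∀ μ, (γ μ)ᴴ = (-ηc μ) • γ μ

/-- The massless Dirac operator `-iγ^μ ∂_μ`. -/
def diracOp (γ : Fin 4 → Matrix (Fin 4) (Fin 4) ℂ) (ψ : ℝ → Sp → C4) (t : ℝ) (x : Sp) : C4 :=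
  (-Complex.I) • ((γ 0).mulVec (ptE ψ t x) + ∑ a : Fin 3, (γ a.succ).mulVec (pxE a ψ t x))

/-- Modified rotation `Ω̂_{ab} = Ω_{ab} - (1/2)γ^a γ^b`. -/
def hatRotE (γ : Fin 4 → Matrix (Fin 4) (Fin 4) ℂ) (a b : Fin 3)
    (ψ : ℝ → Sp → C4) (t : ℝ) (x : Sp) : C4 :=
  rotE a b ψ t x - (1 / 2 : ℂ) • ((γ a.succ * γ b.succ).mulVec (ψ t x))

/-- Modified boost `L̂_a = L_a - (1/2)γ⁰ γ^a`. -/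
def hatBoostE (γ : Fin 4 → Matrix (Fin 4) (Fin 4) ℂ) (a : Fin 3)
    (ψ : ℝ → Sp → C4) (t : ℝ) (x : Sp) : C4 :=
  boostE a ψ t x - (1 / 2 : ℂ) • ((γ 0 * γ a.succ).mulVec (ψ t x))

/-- `|Γ̂ψ| = (Σ_k |Γ̂_k ψ|²)^{1/2}` over the ten modified fields. -/
def hatGammaNorm (γ : Fin 4 → Matrix (Fin 4) (Fin 4) ℂ)
    (ψ : ℝ → Sp → C4) (t : ℝ) (x : Sp) : ℝ :=
  Real.sqrt (‖ptE ψ t x‖ ^ 2 + (∑ i : Fin 3, ‖pxE i ψ t x‖ ^ 2) +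
    (‖hatRotE γ 0 1 ψ t x‖ ^ 2 + ‖hatRotE γ 0 2 ψ t x‖ ^ 2 + ‖hatRotE γ 1 2 ψ t x‖ ^ 2) +
    ∑ a : Fin 3, ‖hatBoostE γ a ψ t x‖ ^ 2)

/-- `|∂ψ| = (Σ_α |∂_α ψ|²)^{1/2}` for `ℂ⁴`-valued `ψ`. -/
def DNormC4 (ψ : ℝ → Sp → C4) (t : ℝ) (x : Sp) : ℝ :=
  Real.sqrt (‖ptE ψ t x‖ ^ 2 + ∑ i : Fin 3, ‖pxE i ψ t x‖ ^ 2)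

/-- `ω_a = x_a / |x|`. -/
def omg (x : Sp) (a : Fin 3) : ℝ := x a / ‖x‖

/-- The Dirac bilinear `φ₁* γ⁰ φ₂`. -/
def dform (γ : Fin 4 → Matrix (Fin 4) (Fin 4) ℂ) (φ₁ φ₂ : C4) : ℂ :=
  star φ₁ ⬝ᵥ (γ 0).mulVec φ₂

/-- `[φ]₋ = φ - ω_a γ⁰γ^a φ`. -/
def projMinus (γ : Fin 4 → Matrix (Fin 4) (Fin 4) ℂ) (x : Sp) (φ : C4) : C4 :=
  φ - ∑ a : Fin 3, ((omg x a : ℝ) : ℂ) • ((γ 0 * γ a.succ).mulVec φ)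

/-- `[φ]₊ = φ + ω_a γ⁰γ^a φ`. -/
def projPlus (γ : Fin 4 → Matrix (Fin 4) (Fin 4) ℂ) (x : Sp) (φ : C4) : C4 :=
  φ + ∑ a : Fin 3, ((omg x a : ℝ) : ℂ) • ((γ 0 * γ a.succ).mulVec φ)

/-- Ghost weight `q(r,t) = ∫_{-∞}^{r-t} ⟨s⟩^{-1-2δ} ds`. -/
def qw (δ t r : ℝ) : ℝ := ∫ s in Set.Iic (r - t), (jb s) ^ (-(1 + 2 * δ))
set_option maxHeartbeats 1600000


lemma jb_pos (p : ℝ) : 0 < jb p := Real.sqrt_pos.2 (by positivity)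

lemma one_le_jb (p : ℝ) : 1 ≤ jb p := by
  have : (1:ℝ) = Real.sqrt 1 := by simp
  rw [this, jb]
  exact Real.sqrt_le_sqrt (by nlinarith [sq_nonneg p])

lemma abs_le_jb (p : ℝ) : |p| ≤ jb p := by
  rw [← Real.sqrt_sq_eq_abs, jb]
  exact Real.sqrt_le_sqrt (by nlinarith)

lemma sqrt_le_of_sq (a b : ℝ) (hb : 0 ≤ b) (h : a ≤ b ^ 2) : Real.sqrt a ≤ b := by
  calc Real.sqrt a ≤ Real.sqrt (b ^ 2) := Real.sqrt_le_sqrt h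
  _ = b := Real.sqrt_sq hb

lemma abs_le_sqrt_of_sq (a S : ℝ) (h : a ^ 2 ≤ S) : |a| ≤ Real.sqrt S := by
  rw [← Real.sqrt_sq_eq_abs]; exact Real.sqrt_le_sqrt h

lemma q0_key (t r Rf Rg : ℝ) (xv Fa Ga : Fin 3 → ℝ) (Ft Gt : ℝ)
    (hr2 : r ^ 2 = ∑ i, (xv i) ^ 2) (hr0 : 0 ≤ r) (hRf : 0 ≤ Rf) (hRg : 0 ≤ Rg)
    (hrx : r ≤ 3 * t + 3) :
    |Ft * Gt - ∑ a, Fa a * Ga a| ≤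
      100 * ((jb (t - r) / jb (t + r)) *
          (Real.sqrt (Ft ^ 2 + ∑ a, (Fa a) ^ 2) * Real.sqrt (Gt ^ 2 + ∑ a, (Ga a) ^ 2)) +
        (jb t)⁻¹ *
          (Real.sqrt (Ft ^ 2 + (∑ a, (Fa a) ^ 2) + Rf + ∑ a, (t * Fa a + xv a * Ft) ^ 2) *
           Real.sqrt (Gt ^ 2 + (∑ a, (Ga a) ^ 2) + Rg + ∑ a, (t * Ga a + xv a * Gt) ^ 2))) := by
  set SF := ∑ a, (Fa a) ^ 2 with hSF
  set SG := ∑ a, (Ga a) ^ 2 with hSG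
  set Pf := Real.sqrt (Ft ^ 2 + SF) with hPf
  set Pg := Real.sqrt (Gt ^ 2 + SG) with hPg
  set Qf := Real.sqrt (Ft ^ 2 + SF + Rf + ∑ a, (t * Fa a + xv a * Ft) ^ 2) with hQf
  set Qg := Real.sqrt (Gt ^ 2 + SG + Rg + ∑ a, (t * Ga a + xv a * Gt) ^ 2) with hQg
  have hSFnn : 0 ≤ SF := Finset.sum_nonneg fun a _ => sq_nonneg _
  have hSGnn : 0 ≤ SG := Finset.sum_nonneg fun a _ => sq_nonneg _
  have hLFnn : 0 ≤ ∑ a, (t * Fa a + xv a * Ft) ^ 2 := Finset.sum_nonneg fun a _ => sq_nonneg _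
  have hLGnn : 0 ≤ ∑ a, (t * Ga a + xv a * Gt) ^ 2 := Finset.sum_nonneg fun a _ => sq_nonneg _
  have hPf0 : 0 ≤ Pf := Real.sqrt_nonneg _
  have hPg0 : 0 ≤ Pg := Real.sqrt_nonneg _
  have hQf0 : 0 ≤ Qf := Real.sqrt_nonneg _
  have hQg0 : 0 ≤ Qg := Real.sqrt_nonneg _
  have hJ1 := jb_pos (t - r)
  have hJ2 := jb_pos (t + r)
  have hJ3 := jb_pos t
  have hJ1one := one_le_jb (t - r)
  -- basic component bounds
  have hsq_le : ∀ a : Fin 3, ∀ h : Fin 3 → ℝ, (h a) ^ 2 ≤ ∑ i, (h i) ^ 2 := by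
    intro a h
    exact Finset.single_le_sum (f := fun i => (h i)^2) (fun i _ => sq_nonneg _) (Finset.mem_univ a)
  have hFt : |Ft| ≤ Pf := abs_le_sqrt_of_sq _ _ (by nlinarith)
  have hGt : |Gt| ≤ Pg := abs_le_sqrt_of_sq _ _ (by nlinarith)
  have hFa : ∀ a, |Fa a| ≤ Pf := fun a => abs_le_sqrt_of_sq _ _ (by
    have := hsq_le a Fa; rw [← hSF] at this; nlinarith)
  have hGa : ∀ a, |Ga a| ≤ Pg := fun a => abs_le_sqrt_of_sq _ _ (by
    have := hsq_le a Ga; rw [← hSG] at this; nlinarith)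
  have hPfQf : Pf ≤ Qf := Real.sqrt_le_sqrt (by nlinarith)
  have hPgQg : Pg ≤ Qg := Real.sqrt_le_sqrt (by nlinarith)
  have hFtQ : |Ft| ≤ Qf := hFt.trans hPfQf
  have hGtQ : |Gt| ≤ Qg := hGt.trans hPgQg
  have hLF : ∀ a, |t * Fa a + xv a * Ft| ≤ Qf := fun a => abs_le_sqrt_of_sq _ _ (by
    have := hsq_le a (fun i => t * Fa i + xv i * Ft); nlinarith)
  have hLG : ∀ a, |t * Ga a + xv a * Gt| ≤ Qg := fun a => abs_le_sqrt_of_sq _ _ (by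
    have := hsq_le a (fun i => t * Ga i + xv i * Gt); nlinarith)
  have hxa : ∀ a, |xv a| ≤ r := fun a => by
    have h1 := hsq_le a xv
    rw [← hr2] at h1
    calc |xv a| = Real.sqrt ((xv a)^2) := (Real.sqrt_sq_eq_abs _).symm
    _ ≤ Real.sqrt (r ^ 2) := Real.sqrt_le_sqrt h1
    _ = r := Real.sqrt_sq hr0
  -- trivial bound |Q0| ≤ 4 Pf Pg
  have habsmul : ∀ A B : ℝ, |A| ≤ Pf → |B| ≤ Pg → |A * B| ≤ Pf * Pg := by
    intro A B hA hB
    rw [abs_mul]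
    exact mul_le_mul hA hB (abs_nonneg _) hPf0
  have htriv : |Ft * Gt - ∑ a, Fa a * Ga a| ≤ 4 * (Pf * Pg) := by
    have h1 : |Ft * Gt - ∑ a, Fa a * Ga a| ≤ |Ft * Gt| + |∑ a, Fa a * Ga a| :=
      abs_sub _ _
    have h2 : |∑ a, Fa a * Ga a| ≤ ∑ a, |Fa a * Ga a| := Finset.abs_sum_le_sum_abs _ _
    have h3 : ∑ a, |Fa a * Ga a| ≤ ∑ a : Fin 3, Pf * Pg :=
      Finset.sum_le_sum fun a _ => habsmul _ _ (hFa a) (hGa a)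
    have h4 : (∑ _a : Fin 3, Pf * Pg) = 3 * (Pf * Pg) := by
      rw [Fin.sum_univ_three]; ring
    have h5 := habsmul _ _ hFt hGt
    linarith
  rcases le_or_gt t 1 with ht1 | ht1
  · -- small time case
    have htm1 : -1 ≤ t := by linarith
    have hJ2le : jb (t + r) ≤ 8 := by
      rw [jb]
      apply sqrt_le_of_sq _ _ (by norm_num)
      have h1 : r ≤ 6 := by linarith
      have h2 : |t + r| ≤ 7 := by rw [abs_le]; constructor <;> linarith
      nlinarith [abs_nonneg (t + r), sq_abs (t + r)]
    have hratio : 1 / 8 ≤ jb (t - r) / jb (t + r) := by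
      rw [div_le_div_iff₀ (by norm_num) hJ2]
      nlinarith
    have hterm2 : 0 ≤ (jb t)⁻¹ * (Qf * Qg) := by positivity
    have hPP : 0 ≤ Pf * Pg := mul_nonneg hPf0 hPg0
    nlinarith [mul_le_mul_of_nonneg_right hratio hPP]
  · -- large time case t > 1
    have ht0 : 0 < t := by linarith
    have hr6 : r ≤ 6 * t := by nlinarith
    -- the identity
    have hr2' : r ^ 2 = xv 0 ^ 2 + xv 1 ^ 2 + xv 2 ^ 2 := by
      rw [hr2, Fin.sum_univ_three]
    have hid : t ^ 2 * (Ft * Gt - ∑ a, Fa a * Ga a) =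
        (t ^ 2 - r ^ 2) * (Ft * Gt) - (∑ a, (t * Fa a + xv a * Ft) * (t * Ga a + xv a * Gt))
          + ∑ a, xv a * (Ft * (t * Ga a + xv a * Gt) + (t * Fa a + xv a * Ft) * Gt) := by
      simp only [Fin.sum_univ_three]
      rw [hr2']
      ring
    -- bound the numerator
    have h1 : |(t ^ 2 - r ^ 2) * (Ft * Gt)| ≤ |t - r| * (t + r) * (Pf * Pg) := by
      have : |(t ^ 2 - r ^ 2)| = |t - r| * (t + r) := by
        rw [show t ^ 2 - r ^ 2 = (t - r) * (t + r) by ring, abs_mul,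
          abs_of_nonneg (by linarith : (0:ℝ) ≤ t + r)]
      rw [abs_mul, this]
      have h0 : 0 ≤ |t - r| * (t + r) := mul_nonneg (abs_nonneg _) (by linarith)
      exact mul_le_mul_of_nonneg_left (habsmul _ _ hFt hGt) h0
    have h2 : |∑ a, (t * Fa a + xv a * Ft) * (t * Ga a + xv a * Gt)| ≤ 3 * (Qf * Qg) := by
      calc |∑ a, (t * Fa a + xv a * Ft) * (t * Ga a + xv a * Gt)|
          ≤ ∑ a, |(t * Fa a + xv a * Ft) * (t * Ga a + xv a * Gt)| :=
            Finset.abs_sum_le_sum_abs _ _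
        _ ≤ ∑ _a : Fin 3, Qf * Qg := Finset.sum_le_sum fun a _ => by
            rw [abs_mul]; exact mul_le_mul (hLF a) (hLG a) (abs_nonneg _) hQf0
        _ = 3 * (Qf * Qg) := by rw [Fin.sum_univ_three]; ring
    have h3 : |∑ a, xv a * (Ft * (t * Ga a + xv a * Gt) + (t * Fa a + xv a * Ft) * Gt)| ≤
        6 * r * (Qf * Qg) := by
      calc |∑ a, xv a * (Ft * (t * Ga a + xv a * Gt) + (t * Fa a + xv a * Ft) * Gt)|
          ≤ ∑ a, |xv a * (Ft * (t * Ga a + xv a * Gt) + (t * Fa a + xv a * Ft) * Gt)| :=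
            Finset.abs_sum_le_sum_abs _ _
        _ ≤ ∑ _a : Fin 3, r * (2 * (Qf * Qg)) := Finset.sum_le_sum fun a _ => by
            rw [abs_mul]
            have hin : |Ft * (t * Ga a + xv a * Gt) + (t * Fa a + xv a * Ft) * Gt| ≤
                2 * (Qf * Qg) := by
              have e1 : |Ft * (t * Ga a + xv a * Gt)| ≤ Qf * Qg := by
                rw [abs_mul]; exact mul_le_mul hFtQ (hLG a) (abs_nonneg _) hQf0
              have e2 : |(t * Fa a + xv a * Ft) * Gt| ≤ Qf * Qg := by
                rw [abs_mul]; exact mul_le_mul (hLF a) hGtQ (abs_nonneg _) hQf0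
              calc |Ft * (t * Ga a + xv a * Gt) + (t * Fa a + xv a * Ft) * Gt|
                  ≤ |Ft * (t * Ga a + xv a * Gt)| + |(t * Fa a + xv a * Ft) * Gt| :=
                    abs_add_le _ _
                _ ≤ 2 * (Qf * Qg) := by linarith
            exact mul_le_mul (hxa a) hin (abs_nonneg _) hr0
        _ = 6 * r * (Qf * Qg) := by rw [Fin.sum_univ_three]; ring
    have hnum : |t ^ 2 * (Ft * Gt - ∑ a, Fa a * Ga a)| ≤
        |t - r| * (t + r) * (Pf * Pg) + (3 + 6 * r) * (Qf * Qg) := by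
      rw [hid]
      have e1 := abs_add_le
        ((t ^ 2 - r ^ 2) * (Ft * Gt) - ∑ a, (t * Fa a + xv a * Ft) * (t * Ga a + xv a * Gt))
        (∑ a, xv a * (Ft * (t * Ga a + xv a * Gt) + (t * Fa a + xv a * Ft) * Gt))
      have e2 := abs_sub ((t ^ 2 - r ^ 2) * (Ft * Gt))
        (∑ a, (t * Fa a + xv a * Ft) * (t * Ga a + xv a * Gt))
      linarith [h1, h2, h3]
    -- jb bounds
    have hJ2le : jb (t + r) ≤ 8 * t := by
      rw [jb]; apply sqrt_le_of_sq _ _ (by linarith); nlinarith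
    have hJ3le : jb t ≤ 2 * t := by
      rw [jb]; apply sqrt_le_of_sq _ _ (by linarith); nlinarith
    have hJ1ge : |t - r| ≤ jb (t - r) := abs_le_jb _
    -- final arithmetic
    have hQ0 : |Ft * Gt - ∑ a, Fa a * Ga a| =
        |t ^ 2 * (Ft * Gt - ∑ a, Fa a * Ga a)| / t ^ 2 := by
      rw [abs_mul, abs_of_nonneg (by positivity : (0:ℝ) ≤ t ^ 2)]
      field_simp
    have ht2 : (0:ℝ) < t ^ 2 := by positivity
    have hstepA : |t - r| * (t + r) * (Pf * Pg) / t ^ 2 ≤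
        56 * (jb (t - r) / jb (t + r)) * (Pf * Pg) := by
      have hPP : 0 ≤ Pf * Pg := mul_nonneg hPf0 hPg0
      rw [div_le_iff₀ ht2]
      have key1 : |t - r| * (t + r) * jb (t + r) ≤ 56 * jb (t - r) * t ^ 2 := by
        have a1 : t + r ≤ 7 * t := by linarith
        have c1 : |t - r| * (t + r) ≤ jb (t - r) * (7 * t) :=
          mul_le_mul hJ1ge a1 (by linarith) hJ1.le
        have c2 : |t - r| * (t + r) * jb (t + r) ≤ jb (t - r) * (7 * t) * (8 * t) :=
          mul_le_mul c1 hJ2le hJ2.le (by positivity)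
        calc |t - r| * (t + r) * jb (t + r) ≤ jb (t - r) * (7 * t) * (8 * t) := c2
          _ = 56 * jb (t - r) * t ^ 2 := by ring
      calc |t - r| * (t + r) * (Pf * Pg) ≤
          (56 * jb (t - r) * t ^ 2 / jb (t + r)) * (Pf * Pg) := by
            apply mul_le_mul_of_nonneg_right _ hPP
            rw [le_div_iff₀ hJ2]
            exact key1
        _ = 56 * (jb (t - r) / jb (t + r)) * (Pf * Pg) * t ^ 2 := by field_simp
    have hstepB : (3 + 6 * r) * (Qf * Qg) / t ^ 2 ≤ 78 * (jb t)⁻¹ * (Qf * Qg) := by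
      have hQQ : 0 ≤ Qf * Qg := mul_nonneg hQf0 hQg0
      rw [div_le_iff₀ ht2]
      have key2 : (3 + 6 * r) * jb t ≤ 78 * t ^ 2 := by
        have b1 : 3 + 6 * r ≤ 39 * t := by linarith
        have c1 : (3 + 6 * r) * jb t ≤ 39 * t * (2 * t) :=
          mul_le_mul b1 hJ3le hJ3.le (by linarith)
        calc (3 + 6 * r) * jb t ≤ 39 * t * (2 * t) := c1
          _ = 78 * t ^ 2 := by ring
      calc (3 + 6 * r) * (Qf * Qg) ≤ (78 * t ^ 2 / jb t) * (Qf * Qg) := by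
            apply mul_le_mul_of_nonneg_right _ hQQ
            rw [le_div_iff₀ hJ3]
            exact key2
        _ = 78 * (jb t)⁻¹ * (Qf * Qg) * t ^ 2 := by field_simp
    rw [hQ0]
    have hsplit : |t ^ 2 * (Ft * Gt - ∑ a, Fa a * Ga a)| / t ^ 2 ≤
        |t - r| * (t + r) * (Pf * Pg) / t ^ 2 + (3 + 6 * r) * (Qf * Qg) / t ^ 2 := by
      rw [← add_div]
      gcongr
    have hratnn : 0 ≤ (jb (t - r) / jb (t + r)) * (Pf * Pg) := by positivity
    have hinvnn : 0 ≤ (jb t)⁻¹ * (Qf * Qg) := by positivity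
    linarith [hstepA, hstepB, hsplit, hratnn, hinvnn]

/-- interior null form estimate, valid for `r ≤ 3t+3`. -/
theorem stmt_8 :
    ∃ C : ℝ, 0 < C ∧
      ∀ f g : ℝ → Sp → ℝ, Smth f → Smth g → ∀ t (x : Sp), ‖x‖ ≤ 3 * t + 3 →
        |Q0R f g t x| ≤
          C * ((jb (t - ‖x‖) / jb (t + ‖x‖)) * (DNormR f t x * DNormR g t x) +
            (jb t)⁻¹ * (GammaNormR f t x * GammaNormR g t x)) := by
  refine ⟨100, by norm_num, ?_⟩
  intro f g _ _ t x hx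
  have hx2 : ‖x‖ ^ 2 = ∑ i, (x i) ^ 2 := by
    rw [EuclideanSpace.norm_eq, Real.sq_sqrt (Finset.sum_nonneg fun i _ => sq_nonneg _)]
    simp [Real.norm_eq_abs, sq_abs]
  simp only [Q0R, DNormR, GammaNormR, boostE, smul_eq_mul]
  exact q0_key t ‖x‖ _ _ (fun a => x a) (fun a => pxE a f t x) (fun a => pxE a g t x)
    (ptE f t x) (ptE g t x) hx2 (norm_nonneg x) (by positivity) (by positivity) hx
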